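/- arXiv:2403.02389 — 3 statements merged into one kernel-verified Lean document; each statement's English description precedes it below -/
import Mathlib

section
/- Let V be a positive semidefinite operator on a finite-dimensional Hilbert space and let t ↦ ρ(t) be a family of positive semidefinite operators with tr[ρ(t)] ≤ 1 for all t ∈ [0,τ]. Define w₁(t) = tr[V ρ(t)] and w₂(t) = √(tr[V² ρ(t)]). Then (i) ∫₀^τ w₁(t) dt ≤ ∫₀^τ w₂(t) dt, and (ii) ∫₀^τ w₂(t) dt ≤ (‖V‖ τ)^{3/4} · (∫₀^τ w₁(t) dt)^{1/4}, where ‖V‖ is the operator norm of V. -/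
open MeasureTheory
open scoped ComplexOrder

/-- The operator (spectral) norm of a complex matrix, acting on Euclidean space. -/
noncomputable def matOpNorm {d : ℕ} (M : Matrix (Fin d) (Fin d) ℂ) : ℝ :=
  ‖LinearMap.toContinuousLinearMap (Matrix.toEuclideanLin M)‖

lemma trace_diagonal_mul {d : ℕ} (f : Fin d → ℂ) (M : Matrix (Fin d) (Fin d) ℂ) :
    (Matrix.diagonal f * M).trace = ∑ i, f i * M i i := by
  simp [Matrix.trace, Matrix.diag, Matrix.diagonal_mul]

lemma eig_le_norm {d : ℕ} {V : Matrix (Fin d) (Fin d) ℂ} (hV : V.PosSemidef) (i : Fin d) :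
    hV.1.eigenvalues i ≤ matOpNorm V := by
  set v := hV.1.eigenvectorBasis i with hv
  have hnv : ‖v‖ = 1 := hV.1.eigenvectorBasis.orthonormal.1 i
  have hveq : (Matrix.toEuclideanLin V) v = (hV.1.eigenvalues i : ℝ) • v := by
    have h := hV.1.mulVec_eigenvectorBasis i
    ext j
    have := congrFun h j
    simpa [Matrix.toEuclideanLin_apply] using this
  have h1 : ‖(LinearMap.toContinuousLinearMap (Matrix.toEuclideanLin V)) v‖ ≤ matOpNorm V * ‖v‖ :=
    (LinearMap.toContinuousLinearMap (Matrix.toEuclideanLin V)).le_opNorm v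
  rw [LinearMap.coe_toContinuousLinearMap'] at h1
  rw [hveq, norm_smul, hnv, mul_one, mul_one] at h1
  calc hV.1.eigenvalues i ≤ |hV.1.eigenvalues i| := le_abs_self _
    _ = ‖hV.1.eigenvalues i‖ := rfl
    _ ≤ matOpNorm V := h1

lemma trace_decomp {d : ℕ} {V M : Matrix (Fin d) (Fin d) ℂ} (hV : V.PosSemidef)
    (hM : M.PosSemidef) :
    ∃ p : Fin d → ℝ, (∀ i, 0 ≤ p i) ∧ (∑ i, p i) = M.trace.re ∧
      ((V * M).trace).re = ∑ i, hV.1.eigenvalues i * p i ∧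
      ((V * V * M).trace).re = ∑ i, hV.1.eigenvalues i ^ 2 * p i := by
  set U : Matrix (Fin d) (Fin d) ℂ := (hV.1.eigenvectorUnitary : Matrix (Fin d) (Fin d) ℂ) with hU
  set lam := hV.1.eigenvalues with hlam
  have hUU : U * star U = 1 := (Matrix.mem_unitaryGroup_iff).mp hV.1.eigenvectorUnitary.2
  have hU'U : star U * U = 1 := (Matrix.mem_unitaryGroup_iff').mp hV.1.eigenvectorUnitary.2
  have hspec : V = U * Matrix.diagonal (fun i => (lam i : ℂ)) * star U := by
    have := hV.1.spectral_theorem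
    rw [Unitary.conjStarAlgAut_apply] at this
    exact this
  set D : Matrix (Fin d) (Fin d) ℂ := Matrix.diagonal (fun i => (lam i : ℂ)) with hD
  set σ : Matrix (Fin d) (Fin d) ℂ := star U * M * U with hσdef
  have hσ : σ.PosSemidef := by
    rw [hσdef, Matrix.star_eq_conjTranspose]
    exact hM.conjTranspose_mul_mul_same U
  have hσtr : σ.trace = M.trace := by
    rw [hσdef, Matrix.trace_mul_cycle, hUU, Matrix.one_mul]
  have h1 : (V * M).trace = (D * σ).trace := by
    rw [hspec, hσdef]
    rw [Matrix.mul_assoc, Matrix.mul_assoc, Matrix.trace_mul_comm U (D * (star U * M))]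
    simp only [Matrix.mul_assoc]
  have hVV : V * V = U * (Matrix.diagonal (fun i => (lam i : ℂ) * (lam i : ℂ))) * star U := by
    rw [hspec]
    rw [Matrix.mul_assoc (U * D) (star U) (U * D * star U)]
    rw [← Matrix.mul_assoc (star U) (U * D) (star U)]
    rw [← Matrix.mul_assoc (star U) U D]
    rw [hU'U, Matrix.one_mul]
    rw [Matrix.mul_assoc U D (D * star U), ← Matrix.mul_assoc D D (star U), hD,
      Matrix.diagonal_mul_diagonal, ← Matrix.mul_assoc]
  have h2 : (V * V * M).trace
      = ((Matrix.diagonal (fun i => (lam i : ℂ) * (lam i : ℂ))) * σ).trace := by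
    rw [hVV, hσdef]
    rw [Matrix.mul_assoc, Matrix.mul_assoc,
      Matrix.trace_mul_comm U
        ((Matrix.diagonal (fun i => (lam i : ℂ) * (lam i : ℂ))) * (star U * M))]
    simp only [Matrix.mul_assoc]
  refine ⟨fun i => (σ i i).re, ?_, ?_, ?_, ?_⟩
  · intro i
    have := hσ.re_dotProduct_nonneg (Pi.single i 1)
    simpa [dotProduct, Pi.single_apply, apply_ite] using this
  · rw [← hσtr]
    simp [Matrix.trace, Matrix.diag, Complex.re_sum]
  · rw [h1, trace_diagonal_mul]
    rw [Complex.re_sum]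
    exact Finset.sum_congr rfl fun i _ => by rw [Complex.re_ofReal_mul]
  · rw [h2, trace_diagonal_mul]
    rw [Complex.re_sum]
    refine Finset.sum_congr rfl fun i _ => ?_
    rw [← Complex.ofReal_mul, Complex.re_ofReal_mul]
    ring

lemma pointwise_facts {d : ℕ} {V M : Matrix (Fin d) (Fin d) ℂ} (hV : V.PosSemidef)
    (hM : M.PosSemidef) (htr : M.trace.re ≤ 1) :
    0 ≤ ((V * M).trace).re ∧
    ((V * M).trace).re ≤ Real.sqrt (((V * V * M).trace).re) ∧
    ((V * V * M).trace).re ≤ matOpNorm V * ((V * M).trace).re ∧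
    ((V * M).trace).re ≤ matOpNorm V := by
  obtain ⟨p, hp0, hpsum, hw1, hw2⟩ := trace_decomp hV hM
  set lam := hV.1.eigenvalues with hlam
  have hlam0 : ∀ i, 0 ≤ lam i := hV.eigenvalues_nonneg
  have hlamN : ∀ i, lam i ≤ matOpNorm V := eig_le_norm hV
  have hpsum1 : (∑ i, p i) ≤ 1 := by rw [hpsum]; exact htr
  have ha : 0 ≤ ((V * M).trace).re := by
    rw [hw1]
    exact Finset.sum_nonneg fun i _ => mul_nonneg (hlam0 i) (hp0 i)
  have hcs : (((V * M).trace).re) ^ 2 ≤ ((V * V * M).trace).re := by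
    rw [hw1, hw2]
    calc (∑ i, lam i * p i) ^ 2
        ≤ (∑ i, p i) * (∑ i, lam i ^ 2 * p i) :=
          Finset.sum_sq_le_sum_mul_sum_of_sq_eq_mul _ (fun i _ => hp0 i)
            (fun i _ => mul_nonneg (sq_nonneg _) (hp0 i)) (fun i _ => by ring)
      _ ≤ 1 * (∑ i, lam i ^ 2 * p i) :=
          mul_le_mul_of_nonneg_right hpsum1
            (Finset.sum_nonneg fun i _ => mul_nonneg (sq_nonneg _) (hp0 i))
      _ = ∑ i, lam i ^ 2 * p i := one_mul _
  refine ⟨ha, ?_, ?_, ?_⟩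
  · have h := Real.sqrt_le_sqrt hcs
    rwa [Real.sqrt_sq ha] at h
  · rw [hw1, hw2, Finset.mul_sum]
    refine Finset.sum_le_sum fun i _ => ?_
    have h1 := hlamN i
    have h2 := hlam0 i
    have h3 := hp0 i
    nlinarith [mul_nonneg (mul_nonneg (sub_nonneg.mpr h1) h2) h3]
  · rw [hw1]
    calc ∑ i, lam i * p i
        ≤ ∑ i, matOpNorm V * p i :=
          Finset.sum_le_sum fun i _ => mul_le_mul_of_nonneg_right (hlamN i) (hp0 i)
      _ = matOpNorm V * ∑ i, p i := by rw [← Finset.mul_sum]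
      _ ≤ matOpNorm V * 1 := mul_le_mul_of_nonneg_left hpsum1 (norm_nonneg _)
      _ = matOpNorm V := mul_one _

lemma sqrt_mul_le_rpow {K I : ℝ} (hK : 0 ≤ K) (hI : 0 ≤ I) (hIK : I ≤ K) :
    Real.sqrt (K * I) ≤ K ^ ((3:ℝ)/4) * I ^ ((1:ℝ)/4) := by
  rcases eq_or_lt_of_le hI with h0 | hIpos
  · rw [← h0, mul_zero, Real.sqrt_zero, Real.zero_rpow (by norm_num), mul_zero]
  · have hK0 : 0 < K := lt_of_lt_of_le hIpos hIK
    rw [Real.sqrt_eq_rpow, Real.mul_rpow hK hI]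
    have hsplit : I ^ ((1:ℝ)/2) = I ^ ((1:ℝ)/4) * I ^ ((1:ℝ)/4) := by
      rw [← Real.rpow_add hIpos]; norm_num
    rw [hsplit, ← mul_assoc]
    have h1 : I ^ ((1:ℝ)/4) ≤ K ^ ((1:ℝ)/4) := Real.rpow_le_rpow hI hIK (by norm_num)
    calc K ^ ((1:ℝ)/2) * I ^ ((1:ℝ)/4) * I ^ ((1:ℝ)/4)
        ≤ K ^ ((1:ℝ)/2) * K ^ ((1:ℝ)/4) * I ^ ((1:ℝ)/4) := by gcongr
      _ = K ^ ((3:ℝ)/4) * I ^ ((1:ℝ)/4) := by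
          rw [← Real.rpow_add hK0]; norm_num

lemma integral_sqrt_le {f : ℝ → ℝ} {τ : ℝ} (hτ : 0 ≤ τ) (hf : Continuous f)
    (h0 : ∀ t ∈ Set.Icc (0:ℝ) τ, 0 ≤ f t) :
    (∫ t in (0:ℝ)..τ, Real.sqrt (f t)) ≤ Real.sqrt (τ * ∫ t in (0:ℝ)..τ, f t) := by
  have hfi : IntervalIntegrable f volume 0 τ := hf.intervalIntegrable _ _
  have hsi : IntervalIntegrable (fun t => Real.sqrt (f t)) volume 0 τ :=
    (Real.continuous_sqrt.comp hf).intervalIntegrable _ _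
  rcases eq_or_lt_of_le hτ with hτz | hτpos
  · rw [← hτz]
    simp
  set I := ∫ t in (0:ℝ)..τ, f t with hIdef
  have hI0 : 0 ≤ I := intervalIntegral.integral_nonneg hτ h0
  rcases eq_or_lt_of_le hI0 with hIz | hIpos
  · have hae : f =ᵐ[volume.restrict (Set.Ioc 0 τ)] 0 := by
      refine (intervalIntegral.integral_eq_zero_iff_of_le_of_nonneg_ae hτ ?_ hfi).mp hIz.symm
      refine (ae_restrict_iff' measurableSet_Ioc).mpr (ae_of_all _ ?_)
      exact fun x hx => h0 x ⟨le_of_lt hx.1, hx.2⟩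
    have hz : (∫ t in (0:ℝ)..τ, Real.sqrt (f t)) = 0 := by
      rw [intervalIntegral.integral_of_le hτ]
      have h2 : (fun t => Real.sqrt (f t)) =ᵐ[volume.restrict (Set.Ioc 0 τ)] 0 := by
        filter_upwards [hae] with x hx
        simp [hx]
      rw [MeasureTheory.integral_congr_ae h2]
      simp
    rw [hz]
    exact Real.sqrt_nonneg _
  · set c := I / τ with hc
    have hcpos : 0 < c := div_pos hIpos hτpos
    set s := Real.sqrt c with hs
    have hspos : 0 < s := Real.sqrt_pos.mpr hcpos
    have hs2 : s ^ 2 = c := Real.sq_sqrt hcpos.le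
    have hpt : ∀ t ∈ Set.Icc (0:ℝ) τ, Real.sqrt (f t) ≤ (f t + c) / (2 * s) := by
      intro t ht
      have hft := h0 t ht
      have h1 : Real.sqrt (f t) ^ 2 = f t := Real.sq_sqrt hft
      rw [le_div_iff₀ (by positivity)]
      nlinarith [Real.sqrt_nonneg (f t), sq_nonneg (Real.sqrt (f t) - s)]
    have hint : (∫ t in (0:ℝ)..τ, Real.sqrt (f t)) ≤ ∫ t in (0:ℝ)..τ, (f t + c) / (2*s) :=
      intervalIntegral.integral_mono_on hτ hsi
        (((hf.add continuous_const).div_const _).intervalIntegrable _ _) hpt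
    have hval : (∫ t in (0:ℝ)..τ, (f t + c)/(2*s)) = (I + τ * c) / (2*s) := by
      rw [intervalIntegral.integral_div]
      congr 1
      rw [intervalIntegral.integral_add hfi intervalIntegrable_const,
        intervalIntegral.integral_const]
      simp [smul_eq_mul]
      exact hIdef.symm
    have hτc : τ * c = I := by rw [hc]; field_simp
    have hkey : s * Real.sqrt (τ * I) = I := by
      rw [hs, hc, ← Real.sqrt_mul (by positivity)]
      rw [show I/τ * (τ*I) = I^2 by field_simp]
      exact Real.sqrt_sq hIpos.le
    calc (∫ t in (0:ℝ)..τ, Real.sqrt (f t)) ≤ (I + τ * c) / (2*s) := hint.trans_eq hval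
      _ ≤ Real.sqrt (τ * I) := by
          rw [div_le_iff₀ (by positivity), hτc]
          nlinarith [hkey]

/-- Integral bounds for weighted 1- and 2-norms of a PSD operator against a family of
subnormalized states:  `∫ w₁ ≤ ∫ w₂` and `∫ w₂ ≤ (‖V‖τ)^{3/4} (∫ w₁)^{1/4}`. -/
theorem weighted_norm_integral_bounds {d : ℕ} (τ : ℝ) (hτ : 0 ≤ τ)
    (V : Matrix (Fin d) (Fin d) ℂ) (hV : V.PosSemidef)
    (ρ : ℝ → Matrix (Fin d) (Fin d) ℂ) (hρcont : Continuous ρ)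
    (hρ : ∀ t ∈ Set.Icc (0:ℝ) τ, (ρ t).PosSemidef)
    (hρtr : ∀ t ∈ Set.Icc (0:ℝ) τ, ((ρ t).trace).re ≤ 1) :
    (∫ t in (0:ℝ)..τ, ((V * ρ t).trace).re) ≤
        (∫ t in (0:ℝ)..τ, Real.sqrt (((V * V * ρ t).trace).re)) ∧
    (∫ t in (0:ℝ)..τ, Real.sqrt (((V * V * ρ t).trace).re)) ≤
      (matOpNorm V * τ) ^ ((3:ℝ)/4) *
        (∫ t in (0:ℝ)..τ, ((V * ρ t).trace).re) ^ ((1:ℝ)/4) := by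
  set N := matOpNorm V with hN
  have hN0 : 0 ≤ N := norm_nonneg _
  have key : ∀ t ∈ Set.Icc (0:ℝ) τ,
      0 ≤ ((V * ρ t).trace).re ∧
      ((V * ρ t).trace).re ≤ Real.sqrt (((V * V * ρ t).trace).re) ∧
      ((V * V * ρ t).trace).re ≤ N * ((V * ρ t).trace).re ∧
      ((V * ρ t).trace).re ≤ N :=
    fun t ht => pointwise_facts hV (hρ t ht) (hρtr t ht)
  have hw1c : Continuous fun t => ((V * ρ t).trace).re :=
    Complex.continuous_re.comp ((continuous_const.matrix_mul hρcont).matrix_trace)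
  have hw2c : Continuous fun t => ((V * V * ρ t).trace).re :=
    Complex.continuous_re.comp ((continuous_const.matrix_mul hρcont).matrix_trace)
  have i1 : IntervalIntegrable (fun t => ((V * ρ t).trace).re) volume 0 τ :=
    hw1c.intervalIntegrable _ _
  have i2 : IntervalIntegrable (fun t => Real.sqrt (((V * V * ρ t).trace).re)) volume 0 τ :=
    (Real.continuous_sqrt.comp hw2c).intervalIntegrable _ _
  set I := ∫ t in (0:ℝ)..τ, ((V * ρ t).trace).re with hIdef
  have hI0 : 0 ≤ I := intervalIntegral.integral_nonneg hτ fun t ht => (key t ht).1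
  have hIle : I ≤ N * τ := by
    have h := intervalIntegral.integral_mono_on hτ i1 intervalIntegrable_const
      (fun t ht => (key t ht).2.2.2)
    rwa [intervalIntegral.integral_const, sub_zero, smul_eq_mul, mul_comm] at h
  constructor
  · exact intervalIntegral.integral_mono_on hτ i1 i2 fun t ht => (key t ht).2.1
  · have step1 : (∫ t in (0:ℝ)..τ, Real.sqrt (((V * V * ρ t).trace).re)) ≤
        ∫ t in (0:ℝ)..τ, Real.sqrt (N * ((V * ρ t).trace).re) :=
      intervalIntegral.integral_mono_on hτ i2
        ((Real.continuous_sqrt.comp (continuous_const.mul hw1c)).intervalIntegrable _ _)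
        (fun t ht => Real.sqrt_le_sqrt (key t ht).2.2.1)
    have step2 : (∫ t in (0:ℝ)..τ, Real.sqrt (N * ((V * ρ t).trace).re)) ≤
        Real.sqrt (τ * ∫ t in (0:ℝ)..τ, N * ((V * ρ t).trace).re) :=
      integral_sqrt_le hτ (continuous_const.mul hw1c)
        (fun t ht => mul_nonneg hN0 (key t ht).1)
    have step3 : (∫ t in (0:ℝ)..τ, N * ((V * ρ t).trace).re) = N * I := by
      rw [intervalIntegral.integral_const_mul]
    have step4 : Real.sqrt (τ * (N * I)) ≤ (N * τ) ^ ((3:ℝ)/4) * I ^ ((1:ℝ)/4) := by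
      have : τ * (N * I) = (N * τ) * I := by ring
      rw [this]
      exact sqrt_mul_le_rpow (mul_nonneg hN0 hτ) hI0 hIle
    calc (∫ t in (0:ℝ)..τ, Real.sqrt (((V * V * ρ t).trace).re))
        ≤ ∫ t in (0:ℝ)..τ, Real.sqrt (N * ((V * ρ t).trace).re) := step1
      _ ≤ Real.sqrt (τ * ∫ t in (0:ℝ)..τ, N * ((V * ρ t).trace).re) := step2
      _ = Real.sqrt (τ * (N * I)) := by rw [step3]
      _ ≤ (N * τ) ^ ((3:ℝ)/4) * I ^ ((1:ℝ)/4) := step4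
end

section
/- Let Φ be a completely positive, trace-non-increasing linear map on operators over a finite-dimensional Hilbert space H_C such that there exists a fixed density matrix ρ⁰ with Φ(ρ) proportional to ρ⁰ for every density matrix ρ. Then there exists a positive semidefinite operator M on H_C such that Φ(ρ) = tr[Mρ]·ρ⁰ for all ρ; moreover if Φ(·) = Σ_k J_k (·) J_k† is any Kraus decomposition, then M = Σ_k J_k† J_k, and conversely, writing ρ⁰ = Σ_q p_q |r_q⟩⟨r_q| and M = Σ_l c_l |l⟩⟨l| in spectral form, the operators J_{q,l} = √(p_q c_l)·|r_q⟩⟨l| give a valid Kraus representation of Φ. -/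
open scoped ComplexOrder
open Matrix

private lemma vmv_conj {d : ℕ} (a b : Fin d → ℂ) :
    (vecMulVec a (star b))ᴴ = vecMulVec b (star a) := by
  ext i j
  simp [vecMulVec_apply, conjTranspose_apply, mul_comm]

private lemma vmv_mul_mul {d : ℕ} (a b : Fin d → ℂ) (ρ : Matrix (Fin d) (Fin d) ℂ) :
    vecMulVec a (star b) * ρ * vecMulVec b (star a)
      = (star b ⬝ᵥ ρ *ᵥ b) • vecMulVec a (star a) := by
  ext i j
  simp only [mul_apply, vecMulVec_apply, Matrix.smul_apply, dotProduct, mulVec, smul_eq_mul,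
    Pi.star_apply, Finset.sum_mul, Finset.mul_sum]
  rw [Finset.sum_comm]
  refine Finset.sum_congr rfl fun m _ => Finset.sum_congr rfl fun k _ => by ring

private lemma trace_vmv_mul {d : ℕ} (a : Fin d → ℂ) (ρ : Matrix (Fin d) (Fin d) ℂ) :
    (vecMulVec a (star a) * ρ).trace = star a ⬝ᵥ ρ *ᵥ a := by
  simp only [trace, diag_apply, mul_apply, vecMulVec_apply, dotProduct, mulVec, Pi.star_apply,
    Finset.mul_sum]
  rw [Finset.sum_comm]
  refine Finset.sum_congr rfl fun m _ => Finset.sum_congr rfl fun k _ => by ring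

/-- Characterization of completely positive, trace-non-increasing maps with a single fixed
output state `ρ0`: such a map equals `ρ ↦ tr[Mρ]·ρ0` with `M = Σₖ Jₖᴴ Jₖ` positive semidefinite,
and conversely the rank-one operators `√(p_q c_l) |r_q⟩⟨v_l|` built from spectral
decompositions of `ρ0` and `M` form a Kraus representation of the same map. -/
theorem renewal_channel_characterization
    {d : ℕ} {ι : Type*} [Fintype ι]
    (J : ι → Matrix (Fin d) (Fin d) ℂ)
    (ρ0 : Matrix (Fin d) (Fin d) ℂ) (hρ0 : ρ0.PosSemidef) (hρ0tr : ρ0.trace = 1)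
    (htni : ((1 : Matrix (Fin d) (Fin d) ℂ) - ∑ k, (J k)ᴴ * J k).PosSemidef)
    (hprop : ∀ ρ : Matrix (Fin d) (Fin d) ℂ, ρ.PosSemidef → ρ.trace = 1 →
      ∃ p : ℝ, 0 ≤ p ∧ p ≤ 1 ∧ (∑ k, J k * ρ * (J k)ᴴ) = (p : ℂ) • ρ0) :
    ((∑ k, (J k)ᴴ * J k).PosSemidef ∧
      ∀ ρ : Matrix (Fin d) (Fin d) ℂ, ρ.PosSemidef → ρ.trace = 1 →
        (∑ k, J k * ρ * (J k)ᴴ) = ((∑ k, (J k)ᴴ * J k) * ρ).trace • ρ0) ∧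
    (∀ (p c : Fin d → ℝ) (r v : Fin d → (Fin d → ℂ)),
      (∀ q, 0 ≤ p q) → (∀ l, 0 ≤ c l) →
      ρ0 = ∑ q, ((p q : ℂ) • Matrix.vecMulVec (r q) (star (r q))) →
      (∑ k, (J k)ᴴ * J k) = ∑ l, ((c l : ℂ) • Matrix.vecMulVec (v l) (star (v l))) →
      ∀ ρ : Matrix (Fin d) (Fin d) ℂ, ρ.PosSemidef → ρ.trace = 1 →
        (∑ q, ∑ l, (((Real.sqrt (p q * c l) : ℂ) • Matrix.vecMulVec (r q) (star (v l))) * ρ *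
            ((Real.sqrt (p q * c l) : ℂ) • Matrix.vecMulVec (r q) (star (v l)))ᴴ)) =
          ∑ k, J k * ρ * (J k)ᴴ) := by
  have hM : (∑ k, (J k)ᴴ * J k).PosSemidef := by
    refine Finset.sum_induction _ _ (fun a b ha hb => ha.add hb) Matrix.PosSemidef.zero
      (fun k _ => Matrix.posSemidef_conjTranspose_mul_self _)
  have key : ∀ ρ : Matrix (Fin d) (Fin d) ℂ, ρ.PosSemidef → ρ.trace = 1 →
      (∑ k, J k * ρ * (J k)ᴴ) = ((∑ k, (J k)ᴴ * J k) * ρ).trace • ρ0 := by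
    intro ρ hρ hρtr
    obtain ⟨p, hp0, hp1, hEq⟩ := hprop ρ hρ hρtr
    have htr : ((∑ k, (J k)ᴴ * J k) * ρ).trace = (p : ℂ) := by
      have h1 : (∑ k, J k * ρ * (J k)ᴴ).trace = ((∑ k, (J k)ᴴ * J k) * ρ).trace := by
        rw [Finset.sum_mul, trace_sum, trace_sum]
        exact Finset.sum_congr rfl fun k _ => Matrix.trace_mul_cycle (J k) ρ (J k)ᴴ
      rw [← h1, hEq, trace_smul, hρ0tr, smul_eq_mul, mul_one]
    rw [htr]; exact hEq
  refine ⟨⟨hM, key⟩, ?_⟩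
  intro p c r v hp hc hρ0eq hMeq ρ hρ hρtr
  have hterm : ∀ q l,
      ((Real.sqrt (p q * c l) : ℂ) • vecMulVec (r q) (star (v l))) * ρ *
        ((Real.sqrt (p q * c l) : ℂ) • vecMulVec (r q) (star (v l)))ᴴ
      = ((p q : ℂ) * (c l : ℂ) * (star (v l) ⬝ᵥ ρ *ᵥ v l)) • vecMulVec (r q) (star (r q)) := by
    intro q l
    rw [conjTranspose_smul, vmv_conj, Complex.star_def, Complex.conj_ofReal,
      smul_mul_assoc, smul_mul_assoc, mul_smul_comm, smul_smul, vmv_mul_mul, smul_smul,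
      ← Complex.ofReal_mul, Real.mul_self_sqrt (mul_nonneg (hp q) (hc l)),
      Complex.ofReal_mul, mul_assoc]
  have hT : ((∑ k, (J k)ᴴ * J k) * ρ).trace
      = ∑ l, (c l : ℂ) * (star (v l) ⬝ᵥ ρ *ᵥ v l) := by
    rw [hMeq, Finset.sum_mul, trace_sum]
    refine Finset.sum_congr rfl fun l _ => ?_
    rw [smul_mul_assoc, trace_smul, trace_vmv_mul, smul_eq_mul]
  calc (∑ q, ∑ l, (((Real.sqrt (p q * c l) : ℂ) • vecMulVec (r q) (star (v l))) * ρ *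
            ((Real.sqrt (p q * c l) : ℂ) • vecMulVec (r q) (star (v l)))ᴴ))
      = ∑ q, ∑ l, ((p q : ℂ) * (c l : ℂ) * (star (v l) ⬝ᵥ ρ *ᵥ v l)) •
          vecMulVec (r q) (star (r q)) :=
        Finset.sum_congr rfl fun q _ => Finset.sum_congr rfl fun l _ => hterm q l
    _ = ((∑ k, (J k)ᴴ * J k) * ρ).trace • ρ0 := by
        rw [hρ0eq, hT, Finset.smul_sum]
        refine Finset.sum_congr rfl fun q _ => ?_
        rw [smul_smul, Finset.sum_mul, Finset.sum_smul]
        refine Finset.sum_congr rfl fun l _ => ?_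
        congr 1; ring
    _ = ∑ k, J k * ρ * (J k)ᴴ := (key ρ hρ hρtr).symm
end

section
/- Let A and B be Hermitian operators on a finite-dimensional Hilbert space and suppose the unit vector ψ satisfies (A + iB)ψ = z·ψ for some z ∈ ℂ. Then ψ saturates the Robertson–Schrödinger uncertainty relation: σ_A² σ_B² = ¼(⟨C⟩² + 4σ_{AB}²), where C = −i[A,B], σ_X² = Var_ψ(X), ⟨C⟩ = ⟨ψ|C|ψ⟩, and σ_{AB} = ½⟨ψ|AB + BA|ψ⟩ − ⟨ψ|A|ψ⟩⟨ψ|B|ψ⟩. Moreover σ_{AB} = 0 and ⟨C⟩ = 2σ_B². -/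
open Matrix
open scoped ComplexOrder

/-- The expectation value `⟨ψ|M|ψ⟩` (real part). -/
noncomputable def expVal {d : ℕ} (M : Matrix (Fin d) (Fin d) ℂ) (ψ : Fin d → ℂ) : ℝ :=
  (dotProduct (star ψ) (M.mulVec ψ)).re

/-- The variance `⟨ψ|M²|ψ⟩ − ⟨ψ|M|ψ⟩²`. -/
noncomputable def varVal {d : ℕ} (M : Matrix (Fin d) (Fin d) ℂ) (ψ : Fin d → ℂ) : ℝ :=
  expVal (M * M) ψ - (expVal M ψ) ^ 2

/-- Eigenstates of `A + iB` saturate the Robertson–Schrödinger uncertainty relation: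
`σ_A² σ_B² = ¼(⟨C⟩² + 4σ_{AB}²)` with `C = −i[A,B]`; moreover `σ_{AB} = 0`
and `⟨C⟩ = 2σ_B²`. -/
theorem robertson_schroedinger_saturation {d : ℕ}
    (A B : Matrix (Fin d) (Fin d) ℂ) (hA : A.IsHermitian) (hB : B.IsHermitian)
    (ψ : Fin d → ℂ) (hψ : dotProduct (star ψ) ψ = 1)
    (z : ℂ) (hz : (A + Complex.I • B).mulVec ψ = z • ψ) :
    varVal A ψ * varVal B ψ =
      (1/4) * ((expVal ((-Complex.I) • (A * B - B * A)) ψ) ^ 2 +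
        4 * ((1/2) * expVal (A * B + B * A) ψ - expVal A ψ * expVal B ψ) ^ 2) ∧
    (1/2) * expVal (A * B + B * A) ψ - expVal A ψ * expVal B ψ = 0 ∧
    expVal ((-Complex.I) • (A * B - B * A)) ψ = 2 * varVal B ψ := by
  classical
  set P := A.mulVec ψ with hPdef
  set Q := B.mulVec ψ with hQdef
  have key : ∀ (M : Matrix (Fin d) (Fin d) ℂ), M.IsHermitian → ∀ w : Fin d → ℂ,
      dotProduct (star ψ) (M.mulVec w) = dotProduct (star (M.mulVec ψ)) w := by
    intro M hM w
    rw [Matrix.star_mulVec, ← Matrix.dotProduct_mulVec, hM.eq]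
  set a := dotProduct (star ψ) P with hadef
  set b := dotProduct (star ψ) Q with hbdef
  have hsa : star a = a := by
    calc star a = star (dotProduct (star ψ) (A.mulVec ψ)) := by rw [hadef, hPdef]
      _ = dotProduct (star (A.mulVec ψ)) ψ := by
          rw [← Matrix.star_dotProduct]
      _ = dotProduct (star ψ) (A.mulVec ψ) := (key A hA ψ).symm
      _ = a := by rw [hadef, hPdef]
  have hsb : star b = b := by
    calc star b = star (dotProduct (star ψ) (B.mulVec ψ)) := by rw [hbdef, hQdef]
      _ = dotProduct (star (B.mulVec ψ)) ψ := by
          rw [← Matrix.star_dotProduct]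
      _ = dotProduct (star ψ) (B.mulVec ψ) := (key B hB ψ).symm
      _ = b := by rw [hbdef, hQdef]
  have heig : P + Complex.I • Q = z • ψ := by
    rw [hPdef, hQdef, ← Matrix.smul_mulVec, ← Matrix.add_mulVec, hz]
  have hzab : z = a + Complex.I * b := by
    have := congrArg (fun w => dotProduct (star ψ) w) heig
    simpa [dotProduct_add, dotProduct_smul, hψ, ← hadef, ← hbdef,
      smul_eq_mul] using this.symm
  set u : Fin d → ℂ := P - a • ψ with hudef
  set v : Fin d → ℂ := Q - b • ψ with hvdef
  have huv : u = (-Complex.I) • v := by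
    have hP : P = z • ψ - Complex.I • Q := by rw [← heig]; module
    rw [hudef, hvdef, hP, hzab]
    module
  set t := dotProduct (star v) v with htdef
  have hst : star t = t := by
    rw [htdef]; exact (Matrix.star_dotProduct v v).symm
  have hψu : dotProduct (star ψ) u = 0 := by
    simp [hudef, dotProduct_sub, dotProduct_smul, hψ, ← hadef, smul_eq_mul]
  have hψv : dotProduct (star ψ) v = 0 := by
    simp [hvdef, dotProduct_sub, dotProduct_smul, hψ, ← hbdef, smul_eq_mul]
  have hvψ : dotProduct (star v) ψ = 0 := by
    rw [Matrix.star_dotProduct, hψv, star_zero]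
  have huψ : dotProduct (star u) ψ = 0 := by
    rw [Matrix.star_dotProduct, hψu, star_zero]
  have hPe : P = u + a • ψ := by rw [hudef]; abel
  have hQe : Q = v + b • ψ := by rw [hvdef]; abel
  have huu : dotProduct (star u) u = t := by
    rw [huv, star_smul, smul_dotProduct, dotProduct_smul, ← htdef]
    simp only [star_neg, Complex.star_def, Complex.conj_I, smul_eq_mul, neg_neg]
    linear_combination (-t) * Complex.I_mul_I
  have huv' : dotProduct (star u) v = Complex.I * t := by
    rw [huv, star_smul, smul_dotProduct, ← htdef]
    simp only [star_neg, Complex.star_def, Complex.conj_I, smul_eq_mul, neg_neg]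
  have hvu' : dotProduct (star v) u = -Complex.I * t := by
    rw [huv, dotProduct_smul, ← htdef]
    simp only [smul_eq_mul, neg_mul]
  have expand : ∀ (x y : Fin d → ℂ) (c e : ℂ),
      dotProduct (star (x + c • ψ)) (y + e • ψ) =
        dotProduct (star x) y + e * dotProduct (star x) ψ +
          star c * dotProduct (star ψ) y + star c * e := by
    intro x y c e
    simp [star_add, star_smul, add_dotProduct, dotProduct_add,
      smul_dotProduct, dotProduct_smul, hψ, smul_eq_mul]
    ring
  have hPQ : dotProduct (star P) Q = Complex.I * t + a * b := by
    rw [hPe, hQe, expand, huv', huψ, hψv, hsa]; ring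
  have hQP : dotProduct (star Q) P = -Complex.I * t + a * b := by
    rw [hQe, hPe, expand, hvu', hvψ, hψu, hsb]; ring
  have hPP : dotProduct (star P) P = t + a * a := by
    rw [hPe, expand, huu, huψ, hψu, hsa]; ring
  have hQQ : dotProduct (star Q) Q = t + b * b := by
    rw [hQe, expand, hvψ, hψv, hsb, ← htdef]; ring
  have hareal : a = (a.re : ℂ) := ((Complex.conj_eq_iff_re.mp hsa)).symm
  have hbreal : b = (b.re : ℂ) := ((Complex.conj_eq_iff_re.mp hsb)).symm
  have htreal : t = (t.re : ℂ) := ((Complex.conj_eq_iff_re.mp hst)).symm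
  have eA : expVal A ψ = a.re := rfl
  have eB : expVal B ψ = b.re := rfl
  have eAB : dotProduct (star ψ) ((A * B).mulVec ψ) = Complex.I * t + a * b := by
    rw [← Matrix.mulVec_mulVec, key A hA, ← hQdef, ← hPdef, hPQ]
  have eBA : dotProduct (star ψ) ((B * A).mulVec ψ) = -Complex.I * t + a * b := by
    rw [← Matrix.mulVec_mulVec, key B hB, ← hQdef, ← hPdef, hQP]
  have eAA : dotProduct (star ψ) ((A * A).mulVec ψ) = t + a * a := by
    rw [← Matrix.mulVec_mulVec, key A hA, ← hPdef, hPP]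
  have eBB : dotProduct (star ψ) ((B * B).mulVec ψ) = t + b * b := by
    rw [← Matrix.mulVec_mulVec, key B hB, ← hQdef, hQQ]
  have vA : varVal A ψ = t.re := by
    rw [varVal, expVal, eAA, eA, htreal, hareal]
    push_cast
    simp [Complex.add_re, Complex.mul_re]
    ring
  have vB : varVal B ψ = t.re := by
    rw [varVal, expVal, eBB, eB, htreal, hbreal]
    push_cast
    simp [Complex.add_re, Complex.mul_re]
    ring
  have eC : expVal ((-Complex.I) • (A * B - B * A)) ψ = 2 * t.re := by
    rw [expVal, Matrix.smul_mulVec, dotProduct_smul, Matrix.sub_mulVec,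
      dotProduct_sub, eAB, eBA, htreal]
    have hc : -Complex.I • ((Complex.I * (t.re : ℂ) + a * b) -
        (-Complex.I * (t.re : ℂ) + a * b)) = ((2 * t.re : ℝ) : ℂ) := by
      push_cast
      simp only [smul_eq_mul]
      linear_combination (-2 * (t.re : ℂ)) * Complex.I_mul_I
    rw [hc]; simp
  have eS : expVal (A * B + B * A) ψ = 2 * (a.re * b.re) := by
    rw [expVal, Matrix.add_mulVec, dotProduct_add, eAB, eBA, hareal, hbreal]
    push_cast
    simp [Complex.add_re, Complex.mul_re]
    ring
  refine ⟨?_, ?_, ?_⟩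
  · rw [vA, vB, eC, eS, eA, eB]; ring
  · rw [eS, eA, eB]; ring
  · rw [eC, vB]
end
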